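/- Let σ be a complex d×d density matrix, let O be a Hermitian complex d×d matrix, let 0 ≤ p < 1, and set ρ = (1−p)·σ + (p/d)·I. Then |Tr[ρ²·O]/Tr[ρ²] − Tr[σ²·O]/Tr[σ²]| ≤ 4p‖O‖ / (d·(1−p)²·Tr[σ²]), where Tr[ρ²] and Tr[σ²] are positive real numbers and ‖·‖ is the ℓ²→ℓ² operator norm. -/

import Mathlib

open scoped ComplexOrder

/-- The ℓ²→ℓ² operator norm of a square complex matrix. -/
noncomputable def opNorm {d : ℕ} (M : Matrix (Fin d) (Fin d) ℂ) : ℝ :=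
  ‖Matrix.toEuclideanCLM (𝕜 := ℂ) M‖

lemma quad_bound {d : ℕ} (O : Matrix (Fin d) (Fin d) ℂ) (x : EuclideanSpace ℂ (Fin d)) :
    ‖∑ j, (starRingEnd ℂ) (x j) * (O.mulVec x) j‖ ≤ opNorm O * ‖x‖ ^ 2 := by
  have h1 : (∑ j, (starRingEnd ℂ) (x j) * (O.mulVec x) j)
      = inner (𝕜 := ℂ) x (Matrix.toEuclideanCLM (𝕜 := ℂ) O x) := by
    rw [PiLp.inner_apply]
    simp only [Matrix.ofLp_toEuclideanCLM, RCLike.inner_apply']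
  rw [h1]
  calc ‖inner (𝕜 := ℂ) x (Matrix.toEuclideanCLM (𝕜 := ℂ) O x)‖
      ≤ ‖x‖ * ‖Matrix.toEuclideanCLM (𝕜 := ℂ) O x‖ := norm_inner_le_norm _ _
    _ ≤ ‖x‖ * (opNorm O * ‖x‖) := by
        gcongr; exact (Matrix.toEuclideanCLM (𝕜 := ℂ) O).le_opNorm x
    _ = opNorm O * ‖x‖ ^ 2 := by ring

lemma trace_diagonal_mul' {d : ℕ} (v : Fin d → ℂ) (B : Matrix (Fin d) (Fin d) ℂ) :
    (Matrix.diagonal v * B).trace = ∑ i, v i * B i i := by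
  simp [Matrix.trace, Matrix.diag, Matrix.diagonal_mul]

lemma abs_trace_mul_le {d : ℕ} {M : Matrix (Fin d) (Fin d) ℂ} (hM : M.PosSemidef)
    (O : Matrix (Fin d) (Fin d) ℂ) :
    ‖Matrix.trace (M * O)‖ ≤ (Matrix.trace M).re * opNorm O := by
  classical
  have hH := hM.1
  set U : Matrix (Fin d) (Fin d) ℂ := (hH.eigenvectorUnitary : Matrix (Fin d) (Fin d) ℂ) with hU
  set v : Fin d → ℝ := hH.eigenvalues with hv
  have hUU : star U * U = 1 := Unitary.coe_star_mul_self hH.eigenvectorUnitary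
  have hspec : M = U * Matrix.diagonal ((fun x : ℝ => (x : ℂ)) ∘ v) * star U := hH.spectral_theorem
  have hcol : ∀ i : Fin d, (∑ j, Complex.normSq (U j i)) = 1 := by
    intro i
    have h := congrFun (congrFun hUU i) i
    simp only [Matrix.mul_apply, Matrix.star_apply, Matrix.one_apply_eq] at h
    have : (∑ j, (starRingEnd ℂ) (U j i) * U j i) = 1 := by simpa using h
    have h2 : (∑ j, ((Complex.normSq (U j i) : ℂ))) = 1 := by
      rw [← this]; congr 1; ext j; rw [mul_comm, Complex.mul_conj]
    exact_mod_cast h2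
  -- diagonal entries of star U * O * U bounded by opNorm
  have hdiag : ∀ i : Fin d, ‖(star U * O * U) i i‖ ≤ opNorm O := by
    intro i
    set x : EuclideanSpace ℂ (Fin d) := WithLp.toLp 2 (fun j => U j i) with hx
    have hxnorm : ‖x‖ ^ 2 = 1 := by
      rw [EuclideanSpace.norm_eq, Real.sq_sqrt (by positivity)]
      simpa [Complex.sq_norm] using hcol i
    have hform : (star U * O * U) i i = ∑ j, (starRingEnd ℂ) (x j) * (O.mulVec x) j := by
      simp only [Matrix.mul_apply, Matrix.star_apply, Matrix.mulVec, dotProduct,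
        Finset.sum_mul, Finset.mul_sum, hx]
      rw [Finset.sum_comm]
      congr 1; ext j; congr 1; ext k; rw [starRingEnd_apply]; ring
    rw [hform]
    simpa [hxnorm] using quad_bound O x
  have hev : ∀ i, 0 ≤ v i := fun i => hM.eigenvalues_nonneg i
  -- rewrite trace
  have htr : Matrix.trace (M * O)
      = ∑ i, (v i : ℂ) * (star U * O * U) i i := by
    conv_lhs => rw [hspec]
    rw [mul_assoc, mul_assoc, Matrix.trace_mul_comm, mul_assoc, trace_diagonal_mul']
    rfl
  have htrM : (Matrix.trace M).re = ∑ i, v i := by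
    have : Matrix.trace M = ∑ i, (v i : ℂ) := by
      conv_lhs => rw [hspec]
      rw [Matrix.trace_mul_cycle]
      simp [hUU, Matrix.trace_diagonal]
    rw [this]; simp
  rw [htr, htrM]
  calc ‖∑ i, (v i : ℂ) * (star U * O * U) i i‖
      ≤ ∑ i, ‖(v i : ℂ) * (star U * O * U) i i‖ := by
        exact norm_sum_le _ _
    _ ≤ ∑ i, v i * opNorm O := by
        apply Finset.sum_le_sum
        intro i _
        rw [norm_mul, Complex.norm_of_nonneg (hev i)]
        exact mul_le_mul_of_nonneg_left (hdiag i) (hev i)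
    _ = (∑ i, v i) * opNorm O := by rw [Finset.sum_mul]

lemma trace_sq_real {d : ℕ} {σ : Matrix (Fin d) (Fin d) ℂ} (h : σ.IsHermitian) :
    Matrix.trace (σ ^ 2) = ((∑ i, ∑ j, Complex.normSq (σ i j) : ℝ) : ℂ) := by
  rw [pow_two]
  simp only [Matrix.trace, Matrix.diag, Matrix.mul_apply]
  push_cast
  congr 1; ext i; congr 1; ext j
  rw [← Complex.mul_conj]
  congr 1
  exact (h.apply j i).symm

lemma normSq_sum_pos {d : ℕ} {σ : Matrix (Fin d) (Fin d) ℂ}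
    (htr : Matrix.trace σ = 1) : 0 < ∑ i, ∑ j, Complex.normSq (σ i j) := by
  have h1 : ∃ i : Fin d, σ i i ≠ 0 := by
    by_contra h
    push_neg at h
    have : Matrix.trace σ = 0 := by simp [Matrix.trace, Matrix.diag, h]
    rw [htr] at this; exact one_ne_zero this
  obtain ⟨i, hi⟩ := h1
  calc (0:ℝ) < Complex.normSq (σ i i) := Complex.normSq_pos.mpr hi
    _ ≤ ∑ j, Complex.normSq (σ i j) := by
        apply Finset.single_le_sum (f := fun j => Complex.normSq (σ i j))
          (fun j _ => Complex.normSq_nonneg _) (Finset.mem_univ i)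
    _ ≤ ∑ i, ∑ j, Complex.normSq (σ i j) := by
        apply Finset.single_le_sum (f := fun i => ∑ j, Complex.normSq (σ i j))
          (fun i _ => Finset.sum_nonneg fun j _ => Complex.normSq_nonneg _) (Finset.mem_univ i)

set_option maxHeartbeats 2000000 in
/-- The bound `|δ₂|` of Theorem 2: for a density matrix `σ` under global depolarizing noise
`ρ = (1−p)σ + (p/d)I`, the two-copy purified expectation value changes by at most
`4p‖O‖/(d(1−p)²Tr[σ²])`. -/
theorem purified_expectation_depolarizing_stability (d : ℕ) (hd : 1 ≤ d)
    (σ O : Matrix (Fin d) (Fin d) ℂ)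
    (hpsd : σ.PosSemidef) (htr : Matrix.trace σ = 1)
    (hO : O.IsHermitian) (p : ℝ) (hp0 : 0 ≤ p) (hp1 : p < 1) :
    let ρ : Matrix (Fin d) (Fin d) ℂ :=
      ((1 : ℝ) - p) • σ + (p / d : ℝ) • (1 : Matrix (Fin d) (Fin d) ℂ)
    (Matrix.trace (ρ ^ 2)).im = 0 ∧ 0 < (Matrix.trace (ρ ^ 2)).re ∧
    (Matrix.trace (σ ^ 2)).im = 0 ∧ 0 < (Matrix.trace (σ ^ 2)).re ∧
      ‖Matrix.trace (ρ ^ 2 * O) / Matrix.trace (ρ ^ 2)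
          - Matrix.trace (σ ^ 2 * O) / Matrix.trace (σ ^ 2)‖
        ≤ 4 * p * opNorm O / (d * (1 - p) ^ 2 * (Matrix.trace (σ ^ 2)).re) := by
  intro ρ
  set N := opNorm O with hN
  have hN0 : 0 ≤ N := norm_nonneg _
  have hdR : (0:ℝ) < d := by exact_mod_cast hd
  set q : ℝ := 1 - p with hqdef
  set r : ℝ := p / d with hrdef
  have hq : 0 < q := by simp [hqdef]; linarith
  have hr : 0 ≤ r := div_nonneg hp0 hdR.le
  set T : ℝ := ∑ i, ∑ j, Complex.normSq (σ i j) with hTdef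
  have hTσ : Matrix.trace (σ ^ 2) = (T : ℂ) := trace_sq_real hpsd.1
  have hT : 0 < T := normSq_sum_pos htr
  set A := Matrix.trace (σ ^ 2 * O) with hAdef
  set s := Matrix.trace (σ * O) with hsdef
  set t := Matrix.trace O with htdef
  have hA : ‖A‖ ≤ T * N := by
    have := abs_trace_mul_le (hpsd.pow 2) O
    rwa [hTσ, Complex.ofReal_re] at this
  have hs : ‖s‖ ≤ N := by
    have := abs_trace_mul_le hpsd O
    rwa [htr, Complex.one_re, one_mul] at this
  have ht : ‖t‖ ≤ d * N := by
    have h1 := abs_trace_mul_le (Matrix.PosSemidef.one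
      (n := Fin d) (R := ℂ)) O
    rw [Matrix.trace_one] at h1
    simpa using h1
  have hρ2 : ρ ^ 2 = (q^2) • σ^2 + (2*q*r) • σ + (r^2) • (1 : Matrix (Fin d) (Fin d) ℂ) := by
    show (q • σ + r • (1 : Matrix (Fin d) (Fin d) ℂ)) ^ 2 = _
    simp only [pow_two, add_mul, mul_add, smul_mul_assoc, mul_smul_comm, smul_smul, mul_one,
      one_mul]
    module
  set Tρ : ℝ := q^2*T + 2*q*r + r^2*d with hTρdef
  have htrρ : Matrix.trace (ρ ^ 2) = (Tρ : ℂ) := by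
    rw [hρ2]
    rw [Matrix.trace_add, Matrix.trace_add, Matrix.trace_smul, Matrix.trace_smul,
      Matrix.trace_smul, Matrix.trace_one, hTσ, htr]
    simp only [hTρdef, Complex.real_smul, Fintype.card_fin]
    push_cast
    ring
  have htrρO : Matrix.trace (ρ ^ 2 * O)
      = ((q^2 : ℝ) : ℂ) * A + ((2*q*r : ℝ) : ℂ) * s + ((r^2 : ℝ) : ℂ) * t := by
    rw [hρ2]
    rw [add_mul, add_mul, Matrix.smul_mul, Matrix.smul_mul, Matrix.smul_mul, one_mul,
      Matrix.trace_add, Matrix.trace_add, Matrix.trace_smul, Matrix.trace_smul,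
      Matrix.trace_smul]
    simp only [Complex.real_smul, hAdef, hsdef, htdef]
  have hTρpos : 0 < Tρ := by
    have h1 : 0 < q^2*T := by positivity
    have h2 : 0 ≤ 2*q*r := by positivity
    have h3 : 0 ≤ r^2*d := by positivity
    simp only [hTρdef]; linarith
  have hTρ0 : (Tρ : ℂ) ≠ 0 := by exact_mod_cast hTρpos.ne'
  have hT0 : (T : ℂ) ≠ 0 := by exact_mod_cast hT.ne'
  refine ⟨by rw [htrρ]; simp, by rw [htrρ]; simpa using hTρpos,
    by rw [hTσ]; simp, by rw [hTσ]; simpa using hT, ?_⟩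
  -- main bound
  have hδ : Matrix.trace (ρ ^ 2 * O) / Matrix.trace (ρ ^ 2)
        - Matrix.trace (σ ^ 2 * O) / Matrix.trace (σ ^ 2)
      = ((T : ℂ) * (((2*q*r : ℝ) : ℂ) * s + ((r^2 : ℝ) : ℂ) * t)
          - A * (((2*q*r : ℝ) : ℂ) + ((r^2*d : ℝ) : ℂ)))
        / ((Tρ : ℂ) * (T : ℂ)) := by
    rw [htrρ, htrρO, hTσ]
    field_simp
    simp only [hTρdef]
    push_cast
    ring
  rw [hδ, norm_div, norm_mul, Complex.norm_of_nonneg hTρpos.le,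
    Complex.norm_of_nonneg hT.le]
  have hnum : ‖(T : ℂ) * (((2*q*r : ℝ) : ℂ) * s + ((r^2 : ℝ) : ℂ) * t)
          - A * (((2*q*r : ℝ) : ℂ) + ((r^2*d : ℝ) : ℂ))‖
      ≤ 4 * p * N * T / d := by
    have hc : 2*q*r + r^2*d = p*(2-p)/d := by
      simp only [hqdef, hrdef]
      field_simp
      ring
    have h1 : ‖(T : ℂ) * (((2*q*r : ℝ) : ℂ) * s + ((r^2 : ℝ) : ℂ) * t)‖
        ≤ T * (2*q*r*N + r^2*(d*N)) := by
      rw [norm_mul, Complex.norm_of_nonneg hT.le]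
      have : ‖((2*q*r : ℝ) : ℂ) * s + ((r^2 : ℝ) : ℂ) * t‖
          ≤ 2*q*r*N + r^2*(d*N) := by
        calc ‖((2*q*r : ℝ) : ℂ) * s + ((r^2 : ℝ) : ℂ) * t‖
            ≤ ‖((2*q*r : ℝ) : ℂ) * s‖ + ‖((r^2 : ℝ) : ℂ) * t‖ :=
              norm_add_le _ _
          _ ≤ 2*q*r*N + r^2*(d*N) := by
              rw [norm_mul, norm_mul,
                Complex.norm_of_nonneg (by positivity : (0:ℝ) ≤ 2*q*r),
                Complex.norm_of_nonneg (sq_nonneg r)]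
              gcongr
      exact mul_le_mul_of_nonneg_left this hT.le
    have h2 : ‖A * (((2*q*r : ℝ) : ℂ) + ((r^2*d : ℝ) : ℂ))‖
        ≤ T * N * (2*q*r + r^2*d) := by
      rw [norm_mul]
      have habs : ‖((2*q*r : ℝ) : ℂ) + ((r^2*d : ℝ) : ℂ)‖ = 2*q*r + r^2*d := by
        rw [← Complex.ofReal_add, Complex.norm_real, Real.norm_eq_abs]
        exact abs_of_nonneg (by positivity)
      rw [habs]
      have hcnn : (0:ℝ) ≤ 2*q*r + r^2*d := by positivity
      exact mul_le_mul_of_nonneg_right hA hcnn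
    calc ‖(T : ℂ) * (((2*q*r : ℝ) : ℂ) * s + ((r^2 : ℝ) : ℂ) * t)
          - A * (((2*q*r : ℝ) : ℂ) + ((r^2*d : ℝ) : ℂ))‖
        ≤ ‖(T : ℂ) * (((2*q*r : ℝ) : ℂ) * s + ((r^2 : ℝ) : ℂ) * t)‖
            + ‖A * (((2*q*r : ℝ) : ℂ) + ((r^2*d : ℝ) : ℂ))‖ :=
          by
             exact norm_sub_le _ _
      _ ≤ T * (2*q*r*N + r^2*(d*N)) + T * N * (2*q*r + r^2*d) := add_le_add h1 h2
      _ = 2 * T * N * (2*q*r + r^2*d) := by ring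
      _ = 2 * T * N * (p*(2-p)/d) := by rw [hc]
      _ = 2 * T * N * (p*(2-p)) / d := by ring
      _ ≤ 4 * p * N * T / d := by
          have key : 2*T*N*(p*(2-p)) ≤ 4*p*N*T := by nlinarith [mul_nonneg (mul_nonneg hT.le hN0) (mul_nonneg hp0 hp0)]
          gcongr
  have hre : (Matrix.trace (σ ^ 2)).re = T := by rw [hTσ]; simp
  rw [hre]
  calc ‖(T : ℂ) * (((2*q*r : ℝ) : ℂ) * s + ((r^2 : ℝ) : ℂ) * t)
          - A * (((2*q*r : ℝ) : ℂ) + ((r^2*d : ℝ) : ℂ))‖ / (Tρ * T)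
      ≤ (4 * p * N * T / d) / (Tρ * T) := by gcongr
    _ ≤ (4 * p * N * T / d) / ((q^2*T) * T) := by
        have hle : (q^2*T) * T ≤ Tρ * T := by
          have h2 : 0 ≤ 2*q*r := by positivity
          have h3 : 0 ≤ r^2*(d:ℝ) := by positivity
          have hle' : q^2*T ≤ Tρ := by simp only [hTρdef]; linarith
          exact mul_le_mul_of_nonneg_right hle' hT.le
        have hpos : 0 < (q^2*T) * T := by positivity
        have hnn : 0 ≤ 4 * p * N * T / d := by positivity
        exact div_le_div_of_nonneg_left hnn hpos hle
    _ = 4 * p * N / (↑d * q ^ 2 * T) := by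
        field_simp
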